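/- Let F be a Sidorenko (r−1)-graph and t a positive integer. Then ex(n, F(t)) ≤ O_{F,t}(n^{r − 1/e(F)}). -/

import Mathlib

/-!
Let `H` be a `(k+1)`-graph on `n` vertices with no copy of `F(t)`, and let `L_v` be the link
of a vertex `v`. Double count pairs `(v, φ)` with `φ : V(F) → V(H)` a homomorphism `F → L_v`:
if `φ` is injective and `v(F) + t` vertices `v` work for it, then `t` of them lie outside the
image of `φ` and span a copy of `F(t)` together with it. As only `O(n^{v(F)-1})` maps `φ`
are not injective, `∑_v hom(F, L_v) = O(n^{v(F)})`.
Sidorenko's property applied to each link gives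
`hom(F, L_v) ≥ e(L_v)^{e(F)} n^{v(F) - k e(F)}`, hence `∑_v e(L_v)^{e(F)} = O(n^{k e(F)})`,
and the power mean inequality with `∑_v e(L_v) = (k+1) e(H)` yields
`e(H)^{e(F)} = O(n^{(k+1) e(F) - 1})`.
-/

open Finset

/-- An `r`-uniform hypergraph on vertex type `V`: a set of edges, each an `r`-element
subset of `V`. -/
structure HGraph (r : ℕ) (V : Type) where
  edges : Finset (Finset V)
  uniform : ∀ e ∈ edges, e.card = r

variable {r : ℕ} {α β γ : Type}

/-- The set of homomorphisms from `F` to `H`: maps sending every edge of `F` to an edge of `H`. -/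
def homFinset [Fintype α] [DecidableEq α] [Fintype β] [DecidableEq β]
    (F : HGraph r α) (H : HGraph r β) : Finset (α → β) :=
  Finset.univ.filter fun φ => ∀ e ∈ F.edges, e.image φ ∈ H.edges

/-- The number of homomorphisms from `F` to `H`. -/
def homCount [Fintype α] [DecidableEq α] [Fintype β] [DecidableEq β]
    (F : HGraph r α) (H : HGraph r β) : ℕ :=
  (homFinset F H).card

/-- The homomorphism density `t_F(H) = hom(F,H) / v(H)^{v(F)}`. -/
noncomputable def homDensity [Fintype α] [DecidableEq α] [Fintype β] [DecidableEq β]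
    (F : HGraph r α) (H : HGraph r β) : ℝ :=
  (homCount F H : ℝ) / (Fintype.card β : ℝ) ^ (Fintype.card α)

/-- `K_r^{(r)}`: the `r`-graph consisting of a single edge on `r` vertices. -/
def KEdge (r : ℕ) : HGraph r (Fin r) :=
  ⟨{Finset.univ}, by intro e he; rw [Finset.mem_singleton] at he; subst he; simp⟩

/-- Edge density of an `r`-graph, `t_{K_r^{(r)}}(H)`. -/
noncomputable def edgeDensity [Fintype β] [DecidableEq β] (H : HGraph r β) : ℝ :=
  homDensity (KEdge r) H

/-- An `r`-graph `F` is Sidorenko if `t_F(H) ≥ t_{K_r^{(r)}}(H)^{e(F)}` for all `r`-graphs `H`. -/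
def IsSidorenko [Fintype α] [DecidableEq α] (F : HGraph r α) : Prop :=
  ∀ (β : Type) [Fintype β] [DecidableEq β] (H : HGraph r β),
    homDensity F H ≥ edgeDensity H ^ F.edges.card

/-- The Sidorenko exponent
`s(F) = sup {s ≥ 0 : ∃ r-graph H with t_F(H) = t_{K_r^{(r)}}(H)^s > 0}`. -/
noncomputable def sidorenkoExp [Fintype α] [DecidableEq α] (F : HGraph r α) : ℝ :=
  sSup {s : ℝ | 0 ≤ s ∧ ∃ (n : ℕ) (H : HGraph r (Fin n)),
    homDensity F H = edgeDensity H ^ s ∧ 0 < edgeDensity H ^ s}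

/-- `d_M(U)`: the number of edges of `M` containing at least one vertex of `U`. -/
def degNear [DecidableEq α] (M : HGraph r α) (U : Finset α) : ℕ :=
  (M.edges.filter fun e => ∃ v ∈ U, v ∈ e).card

/-- The set of vertices appearing in some edge of a given edge set. -/
def edgeSupport [DecidableEq α] (Es : Finset (Finset α)) : Finset α :=
  Es.biUnion id
/-- Given `(r-1)`-uniform edge sets `E i` (the prescribed link hypergraphs of the `t`
vertices of the `r`-th part), the `r`-graph on `α ⊕ Fin t` whose link profile is
`(E 0, …, E (t-1))`. -/
def linkCone {k t : ℕ} {α : Type} [DecidableEq α] (E : Fin t → Finset (Finset α))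
    (hE : ∀ i, ∀ f ∈ E i, f.card = k) : HGraph (k + 1) (α ⊕ Fin t) where
  edges := Finset.univ.biUnion fun i : Fin t =>
    (E i).image fun f => insert (Sum.inr i) (f.image Sum.inl)
  uniform := by
    intro e he
    simp only [Finset.mem_biUnion, Finset.mem_image] at he
    obtain ⟨i, -, f, hf, rfl⟩ := he
    rw [Finset.card_insert_of_notMem (by simp),
      Finset.card_image_of_injective _ Sum.inl_injective, hE i f hf]
/-- `F(t)`: the `r`-graph obtained from the `(r−1)`-graph `F` by adding `t` new
vertices, each of whose link hypergraph is `F`. -/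
def HGraph.cone {k : ℕ} {α : Type} [DecidableEq α] (F : HGraph k α) (t : ℕ) :
    HGraph (k + 1) (α ⊕ Fin t) :=
  linkCone (fun _ : Fin t => F.edges) (fun _ f hf => F.uniform f hf)
/-- `H` contains a copy of `G` as a sub-hypergraph. -/
def HGraph.ContainsCopy [DecidableEq β] (H : HGraph r β) (G : HGraph r γ) : Prop :=
  ∃ φ : γ → β, Function.Injective φ ∧ ∀ e ∈ G.edges, e.image φ ∈ H.edges

/-- The extremal (Turán) number `ex(n, G)`: the maximum number of edges of an
`n`-vertex `r`-graph containing no sub-hypergraph isomorphic to `G`. -/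
noncomputable def exNum {γ : Type} (n : ℕ) (G : HGraph r γ) : ℕ :=
  sSup {m : ℕ | ∃ H : HGraph r (Fin n), H.edges.card = m ∧ ¬ H.ContainsCopy G}

theorem le_mul_rpow_of_pow_mul_le {x y C : ℝ} {b E : ℕ} (hx : 0 ≤ x) (hy : 0 < y) (hC : 1 ≤ C)
    (hE : E ≠ 0) (h : x ^ E * y ≤ C * y ^ (b * E)) : x ≤ C * y ^ ((b : ℝ) - 1 / E) := by
  set z := y ^ ((b : ℝ) - 1 / E)
  have hz : z ^ E * y = y ^ (b * E) := by
    rw [← Real.rpow_natCast z, ← Real.rpow_mul hy.le, ← Real.rpow_add_one hy.ne',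
      ← Real.rpow_natCast]
    congr 1
    field_simp
    push_cast
    ring
  have : x ^ E ≤ (C * z) ^ E :=
    calc x ^ E ≤ C * z ^ E := le_of_mul_le_mul_right (h.trans_eq (by rw [← hz, mul_assoc])) hy
      _ ≤ C ^ E * z ^ E := by
          gcongr
          exact le_self_pow₀ hC hE
      _ = (C * z) ^ E := (mul_pow _ _ _).symm
  exact (pow_le_pow_iff_left₀ hx (by positivity) hE).mp this

section CountingMaps

variable [Fintype α] [DecidableEq α] [Fintype β] [DecidableEq β]

theorem card_filter_apply_eq_apply_le {a b : α} (hab : a ≠ b) :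
    #{φ : α → β | φ a = φ b} ≤ Fintype.card β ^ (Fintype.card α - 1) := by
  calc #{φ : α → β | φ a = φ b} ≤ #(univ : Finset ({x // x ≠ b} → β)) := by
        refine card_le_card_of_injOn (fun φ x => φ x) (fun _ _ => mem_coe.2 (mem_univ _)) ?_
        intro φ₁ h₁ φ₂ h₂ h
        simp only [mem_coe, mem_filter, mem_univ, true_and] at h₁ h₂
        funext x
        obtain rfl | hx := eq_or_ne x b
        · rw [← h₁, ← h₂]
          exact congrFun h ⟨a, hab⟩
        · exact congrFun h ⟨x, hx⟩
    _ = Fintype.card β ^ (Fintype.card α - 1) := by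
        rw [card_univ, Fintype.card_fun, Fintype.card_subtype_compl, Fintype.card_subtype_eq]

theorem card_filter_not_injective_le :
    #{φ : α → β | ¬ φ.Injective} ≤ Fintype.card α ^ 2 * Fintype.card β ^ (Fintype.card α - 1) :=
  calc #{φ : α → β | ¬ φ.Injective}
      ≤ #((univ : Finset α).offDiag.biUnion fun p => {φ : α → β | φ p.1 = φ p.2}) := by
        refine card_le_card fun φ hφ => ?_
        obtain ⟨a, b, hab, hne⟩ := Function.not_injective_iff.mp (mem_filter.mp hφ).2
        exact mem_biUnion.2 ⟨(a, b), by simpa using hne, by simpa using hab⟩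
    _ ≤ ∑ p ∈ (univ : Finset α).offDiag, #{φ : α → β | φ p.1 = φ p.2} := card_biUnion_le
    _ ≤ #(univ : Finset α).offDiag • Fintype.card β ^ (Fintype.card α - 1) :=
        sum_le_card_nsmul _ _ _ fun p hp =>
          card_filter_apply_eq_apply_le (mem_offDiag.mp hp).2.2
    _ ≤ Fintype.card α ^ 2 * Fintype.card β ^ (Fintype.card α - 1) := by
        rw [smul_eq_mul, offDiag_card, card_univ, sq]
        gcongr
        exact Nat.sub_le _ _

end CountingMaps

namespace HGraph

section Link

variable {k : ℕ} [DecidableEq β]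

def link (H : HGraph (k + 1) β) (v : β) : HGraph k β where
  edges := {e ∈ H.edges | v ∈ e}.image (·.erase v)
  uniform := by
    simp only [mem_image, mem_filter]
    rintro _ ⟨e, ⟨he, hv⟩, rfl⟩
    rw [card_erase_of_mem hv, H.uniform e he, Nat.add_sub_cancel]

theorem card_link_edges (H : HGraph (k + 1) β) (v : β) :
    #(H.link v).edges = #{e ∈ H.edges | v ∈ e} := by
  refine card_image_of_injOn fun e he e' he' h => ?_
  simp only [mem_coe, mem_filter] at he he' h
  rw [← insert_erase he.2, ← insert_erase he'.2, h]

theorem insert_mem_of_mem_link {H : HGraph (k + 1) β} {v : β} {f : Finset β}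
    (hf : f ∈ (H.link v).edges) : insert v f ∈ H.edges := by
  obtain ⟨e, he, rfl⟩ := mem_image.mp hf
  rw [mem_filter] at he
  rw [insert_erase he.2]
  exact he.1

theorem sum_card_link_edges [Fintype β] (H : HGraph (k + 1) β) :
    ∑ v, #(H.link v).edges = (k + 1) * #H.edges := by
  simp_rw [card_link_edges]
  have := sum_card_bipartiteAbove_eq_sum_card_bipartiteBelow (s := univ) (t := H.edges)
    (r := fun v e => v ∈ e)
  simp only [bipartiteAbove, bipartiteBelow, filter_mem_eq_inter, univ_inter] at this
  rw [this, sum_congr rfl fun e he => H.uniform e he, sum_const, smul_eq_mul, mul_comm]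

end Link

theorem card_edges_le_pow [Fintype β] (H : HGraph r β) : #H.edges ≤ Fintype.card β ^ r :=
  calc #H.edges ≤ #(powersetCard r (univ : Finset β)) :=
        card_le_card fun e he => mem_powersetCard.2 ⟨subset_univ e, H.uniform e he⟩
    _ ≤ Fintype.card β ^ r := by
        rw [card_powersetCard, card_univ]
        exact Nat.choose_le_pow _ _

theorem card_edges_le_homCount_KEdge [Fintype β] [DecidableEq β] (H : HGraph r β) :
    #H.edges ≤ homCount (KEdge r) H := by
  refine card_le_card_of_surjOn (fun φ => univ.image φ) fun f hf => ?_
  obtain ⟨φ, hφ⟩ := Function.Embedding.exists_of_card_eq_finset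
    (α := Fin r) (by rw [Fintype.card_fin, H.uniform f hf])
  have himage : univ.image φ = f := by rw [← hφ, map_eq_image]
  refine ⟨φ, ?_, himage⟩
  simp only [homFinset, KEdge, mem_coe, mem_filter, mem_univ, true_and, mem_singleton,
    forall_eq]
  rwa [himage]

end HGraph

theorem IsSidorenko.card_edges_pow_mul_le [Fintype α] [DecidableEq α] {F : HGraph r α}
    (hF : IsSidorenko F) [Fintype β] [DecidableEq β] [Nonempty β] (G : HGraph r β) :
    (#G.edges : ℝ) ^ #F.edges * Fintype.card β ^ Fintype.card α ≤
      homCount F G * Fintype.card β ^ (r * #F.edges) := by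
  have hn : (0 : ℝ) < Fintype.card β := by exact_mod_cast Fintype.card_pos
  have h := hF β G
  rw [ge_iff_le, edgeDensity, homDensity, homDensity, Fintype.card_fin] at h
  have : ((#G.edges : ℝ) / Fintype.card β ^ r) ^ #F.edges ≤
      homCount F G / Fintype.card β ^ Fintype.card α :=
    le_trans (by gcongr; exact_mod_cast G.card_edges_le_homCount_KEdge) h
  rwa [div_pow, ← pow_mul, div_le_div_iff₀ (by positivity) (by positivity)] at this

namespace HGraph

variable {k t : ℕ} [Fintype α] [DecidableEq α] [Fintype β] [DecidableEq β]
  {F : HGraph k α} {H : HGraph (k + 1) β}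

theorem card_filter_mem_homFinset_link_lt (hH : ¬ H.ContainsCopy (F.cone t)) {φ : α → β}
    (hφ : φ.Injective) : #{v | φ ∈ homFinset F (H.link v)} < Fintype.card α + t := by
  set S : Finset β := {v | φ ∈ homFinset F (H.link v)}
  by_contra! hS
  have hcard : Fintype.card (Fin t) ≤ #(S \ univ.image φ) := by
    have := le_card_sdiff (univ.image φ) S
    rw [card_image_of_injective _ hφ, card_univ] at this
    rw [Fintype.card_fin]
    omega
  obtain ⟨ψ, hψ⟩ := Function.Embedding.exists_of_card_le_finset hcard
  have hψ' : ∀ i, φ ∈ homFinset F (H.link (ψ i)) ∧ ∀ a, φ a ≠ ψ i := fun i => by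
    simpa [S, eq_comm] using hψ ⟨i, rfl⟩
  refine hH ⟨Sum.elim φ ψ, hφ.sumElim ψ.injective fun a i => (hψ' i).2 a, ?_⟩
  simp only [cone, linkCone, mem_biUnion, mem_univ, true_and, mem_image]
  rintro _ ⟨i, f, hf, rfl⟩
  rw [image_insert, image_image, Sum.elim_comp_inl, Sum.elim_inr]
  refine insert_mem_of_mem_link ?_
  simp only [homFinset, mem_filter, mem_univ, true_and] at hψ'
  exact (hψ' i).1 f hf

theorem sum_homCount_link_eq :
    ∑ v, homCount F (H.link v) = ∑ φ : α → β, #{v | φ ∈ homFinset F (H.link v)} := by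
  have := sum_card_bipartiteAbove_eq_sum_card_bipartiteBelow (s := univ) (t := univ)
    (r := fun v (φ : α → β) => φ ∈ homFinset F (H.link v))
  simpa only [homCount, bipartiteAbove, bipartiteBelow, filter_mem_eq_inter, univ_inter]
    using this

theorem sum_homCount_link_le (hH : ¬ H.ContainsCopy (F.cone t)) :
    ∑ v, homCount F (H.link v) ≤
      (Fintype.card α + t + Fintype.card α ^ 2) * Fintype.card β ^ Fintype.card α := by
  set a := Fintype.card α
  set n := Fintype.card β
  rw [sum_homCount_link_eq, ← sum_filter_add_sum_filter_not univ Function.Injective]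
  have h_inj : ∑ φ ∈ {φ : α → β | φ.Injective}, #{v | φ ∈ homFinset F (H.link v)} ≤
      n ^ a * (a + t) :=
    calc _ ≤ #{φ : α → β | φ.Injective} • (a + t) := sum_le_card_nsmul _ _ _ fun φ hφ =>
            (card_filter_mem_homFinset_link_lt hH (mem_filter.mp hφ).2).le
      _ ≤ n ^ a * (a + t) := by
            rw [smul_eq_mul]
            gcongr
            exact (card_le_univ _).trans_eq Fintype.card_fun
  have h_not_inj : ∑ φ ∈ {φ : α → β | ¬ φ.Injective}, #{v | φ ∈ homFinset F (H.link v)} ≤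
      a ^ 2 * n ^ a :=
    calc _ ≤ #{φ : α → β | ¬ φ.Injective} • n := sum_le_card_nsmul _ _ _ fun _ _ =>
            card_le_univ _
      _ ≤ a ^ 2 * n ^ (a - 1) * n := by
            rw [smul_eq_mul]
            gcongr
            exact card_filter_not_injective_le
      _ = a ^ 2 * n ^ a := by
            rcases Nat.eq_zero_or_pos a with ha | ha
            · simp [ha]
            · rw [mul_assoc, ← pow_succ, Nat.sub_add_cancel ha]
  linarith

theorem sum_card_link_edges_pow_le [Nonempty β] (hF : IsSidorenko F)
    (hH : ¬ H.ContainsCopy (F.cone t)) :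
    ∑ v, (#(H.link v).edges : ℝ) ^ #F.edges ≤
      (Fintype.card α + t + Fintype.card α ^ 2) * Fintype.card β ^ (k * #F.edges) := by
  set a := Fintype.card α
  set n : ℝ := (Fintype.card β : ℝ)
  refine le_of_mul_le_mul_right ?_ (by positivity : (0 : ℝ) < n ^ a)
  calc (∑ v, (#(H.link v).edges : ℝ) ^ #F.edges) * n ^ a
      ≤ ∑ v, (homCount F (H.link v) : ℝ) * n ^ (k * #F.edges) := by
        rw [sum_mul]
        exact sum_le_sum fun v _ => hF.card_edges_pow_mul_le _
    _ = ((∑ v, homCount F (H.link v) : ℕ) : ℝ) * n ^ (k * #F.edges) := by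
        push_cast
        rw [sum_mul]
    _ ≤ (((a + t + a ^ 2) * Fintype.card β ^ a : ℕ) : ℝ) * n ^ (k * #F.edges) := by
        gcongr
        exact sum_homCount_link_le hH
    _ = (a + t + a ^ 2) * n ^ (k * #F.edges) * n ^ a := by
        push_cast
        ring

theorem card_edges_pow_mul_le (hF : IsSidorenko F) (hH : ¬ H.ContainsCopy (F.cone t))
    (hF₀ : #F.edges ≠ 0) :
    (#H.edges : ℝ) ^ #F.edges * Fintype.card β ≤
      (Fintype.card α + t + Fintype.card α ^ 2) * Fintype.card β ^ ((k + 1) * #F.edges) := by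
  cases isEmpty_or_nonempty β
  · simp only [Fintype.card_eq_zero, Nat.cast_zero, mul_zero]
    positivity
  obtain ⟨m, hm⟩ := Nat.exists_eq_add_one_of_ne_zero hF₀
  set C : ℝ := (Fintype.card α + t + Fintype.card α ^ 2 : ℝ)
  set n : ℝ := (Fintype.card β : ℝ)
  have h_sum : (#H.edges : ℝ) ≤ ∑ v, (#(H.link v).edges : ℝ) := by
    have := Nat.le_mul_of_pos_left #H.edges k.succ_pos
    rw [← sum_card_link_edges] at this
    exact_mod_cast this
  set d : β → ℝ := fun v => #(H.link v).edges
  have h_power_mean : (∑ v, d v) ^ (m + 1) ≤ n ^ m * ∑ v, d v ^ (m + 1) := by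
    simpa using pow_sum_le_card_mul_sum_pow (s := univ) (fun v _ => Nat.cast_nonneg _) m
  calc (#H.edges : ℝ) ^ #F.edges * n ≤ (∑ v, d v) ^ (m + 1) * n := by
        rw [hm]
        gcongr
    _ ≤ n ^ m * (∑ v, d v ^ (m + 1)) * n := by gcongr
    _ = n ^ (m + 1) * ∑ v, d v ^ #F.edges := by
        rw [hm]
        ring
    _ ≤ n ^ (m + 1) * (C * n ^ (k * #F.edges)) := by
        gcongr
        exact sum_card_link_edges_pow_le hF hH
    _ = C * n ^ ((k + 1) * #F.edges) := by
        rw [hm]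
        ring

theorem card_edges_le_of_not_containsCopy_cone (hF : IsSidorenko F)
    (hH : ¬ H.ContainsCopy (F.cone t)) (hF₀ : #F.edges ≠ 0) :
    (#H.edges : ℝ) ≤ (Fintype.card α + t + Fintype.card α ^ 2 + 1) *
      (Fintype.card β : ℝ) ^ ((k + 1 : ℝ) - 1 / #F.edges) := by
  cases isEmpty_or_nonempty β
  · have := H.card_edges_le_pow
    rw [Fintype.card_eq_zero, zero_pow k.succ_ne_zero, Nat.le_zero] at this
    rw [this, Nat.cast_zero]
    positivity
  have := le_mul_rpow_of_pow_mul_le (b := k + 1)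
    (C := Fintype.card α + t + Fintype.card α ^ 2 + 1) (Nat.cast_nonneg _)
    (by exact_mod_cast Fintype.card_pos) (by simp only [le_add_iff_nonneg_left]; positivity) hF₀
    ((card_edges_pow_mul_le hF hH hF₀).trans
      (mul_le_mul_of_nonneg_right (le_add_of_nonneg_right zero_le_one) (by positivity)))
  simpa using this

end HGraph

theorem exNum_le_of_forall_card_edges_le {G : HGraph r γ} {n : ℕ} {B : ℝ} (hB : 0 ≤ B)
    (h : ∀ H : HGraph r (Fin n), ¬ H.ContainsCopy G → (#H.edges : ℝ) ≤ B) :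
    (exNum n G : ℝ) ≤ B := by
  refine le_trans (Nat.cast_le.2 (csSup_le' ?_)) (Nat.floor_le hB)
  rintro _ ⟨H, rfl, hH⟩
  exact Nat.le_floor (h H hH)

theorem stmt10_general {k : ℕ} {α : Type} [Fintype α] [DecidableEq α]
    (F : HGraph k α) (hF : IsSidorenko F) (t : ℕ) :
    ∃ C : ℝ, 0 < C ∧ ∀ n : ℕ,
      (exNum n (F.cone t) : ℝ) ≤
        C * (n : ℝ) ^ ((k + 1 : ℝ) - 1 / (F.edges.card : ℝ)) := by
  by_cases hF₀ : F.edges.card = 0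
  -- here `1 / e(F) = 0`, so the trivial bound `e(H) ≤ n ^ (k + 1)` is what is claimed
  · refine ⟨1, one_pos, fun n => exNum_le_of_forall_card_edges_le (by positivity) fun H _ => ?_⟩
    rw [hF₀, Nat.cast_zero, div_zero, sub_zero, one_mul, ← Nat.cast_add_one, Real.rpow_natCast]
    exact_mod_cast Fintype.card_fin n ▸ H.card_edges_le_pow
  · refine ⟨Fintype.card α + t + Fintype.card α ^ 2 + 1, by positivity, fun n =>
      exNum_le_of_forall_card_edges_le (by positivity) fun H hH => ?_⟩
    simpa using HGraph.card_edges_le_of_not_containsCopy_cone hF hH hF₀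

/-- If `F` is a Sidorenko `(r−1)`-graph then
`ex(n, F(t)) ≤ O_{F,t}(n^{r − 1/e(F)})`. -/
theorem stmt10 {k : ℕ} (hk : 1 ≤ k) {α : Type} [Fintype α] [DecidableEq α]
    (F : HGraph k α) (hF : IsSidorenko F) (t : ℕ) (ht : 0 < t) :
    ∃ C : ℝ, 0 < C ∧ ∀ n : ℕ,
      (exNum n (F.cone t) : ℝ) ≤
        C * (n : ℝ) ^ ((k + 1 : ℝ) - 1 / (F.edges.card : ℝ)) :=
  stmt10_general F hF t
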